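/- Let k₁, k₂ > 0 and 0 < c₀ < k₁. Let R : [0,∞) → SO(3) and Ω : [0,∞) → ℝ³ be differentiable and satisfy the closed-loop attitude dynamics Ṙ = R Ω̂ and Ω̇ = −k₂ η(R) − k₁ Ω. Define V₂(t) = ½ ‖Ω(t)‖² + c₀ ⟨η(R(t)), Ω(t)⟩ + (k₂ + c₀ k₁) Ψ(R(t)). Then V₂ is differentiable and for all t ≥ 0: V̇₂(t) ≤ −(k₁ − c₀) ‖Ω(t)‖² − c₀ k₂ ‖η(R(t))‖². -/

import Mathlib

open Matrix Filter
open scoped RealInnerProductSpace Topology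

noncomputable section

/-- Euclidean 3-space. -/
abbrev V3 := EuclideanSpace ℝ (Fin 3)
/-- Euclidean 2-space. -/
abbrev V2 := EuclideanSpace ℝ (Fin 2)

/-- The hat map sending `x ∈ ℝ³` to the skew-symmetric matrix with `hat x *ᵥ y = x × y`. -/
def hat (x : V3) : Matrix (Fin 3) (Fin 3) ℝ :=
  !![0, -x 2, x 1; x 2, 0, -x 0; -x 1, x 0, 0]

/-- The vee map, inverse of the hat map on skew-symmetric matrices. -/
def vee (A : Matrix (Fin 3) (Fin 3) ℝ) : V3 := WithLp.toLp 2 ![A 2 1, A 0 2, A 1 0]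

/-- `R ∈ SO(3)`: real 3×3 matrices with `RᵀR = I` and `det R = 1`. -/
def SO3 (R : Matrix (Fin 3) (Fin 3) ℝ) : Prop := Rᵀ * R = 1 ∧ R.det = 1

/-- The 3×2 matrix `E = [[1,0],[0,1],[0,0]]`. -/
def Emat : Matrix (Fin 3) (Fin 2) ℝ := !![1,0; 0,1; 0,0]

/-- The third standard basis vector `e₃ = (0,0,1)`. -/
def e3 : V3 := WithLp.toLp 2 ![0,0,1]

/-- Attitude error function `Ψ(R) = ½ tr(I₃ − R)`. -/
def Psi (R : Matrix (Fin 3) (Fin 3) ℝ) : ℝ := (1/2) * Matrix.trace (1 - R)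

/-- Attitude error vector `η(R) = ½ (R − Rᵀ)^∨`. -/
def etaVec (R : Matrix (Fin 3) (Fin 3) ℝ) : V3 := (2⁻¹ : ℝ) • vee (R - Rᵀ)

/-- Matrix-vector multiplication `ℝ³ → ℝ³` (valued in Euclidean space). -/
def mv3 (A : Matrix (Fin 3) (Fin 3) ℝ) (x : V3) : V3 := WithLp.toLp 2 (A.mulVec x)

/-- `E x` for `x ∈ ℝ²`. -/
def mvE (x : V2) : V3 := WithLp.toLp 2 (Emat.mulVec x)

/-- `Eᵀ y` for `y ∈ ℝ³`. -/
def mvET (y : V3) : V2 := WithLp.toLp 2 (Ematᵀ.mulVec y)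

attribute [local instance] Matrix.normedAddCommGroup Matrix.normedSpace

/-!
Differentiate `V₂` term by term. As `η` is linear, `d/dt η(R) = η(RΩ̂)`, and
`d/dt Ψ(R) = -½ tr(RΩ̂) = ⟨η(R), Ω⟩`; the weight `k₂ + c₀k₁` on `Ψ` is exactly what cancels the
`⟨η(R), Ω⟩` terms coming from `⟨Ω, Ω̇⟩` and `c₀⟨η(R), Ω̇⟩`. The one remaining indefinite term is
`c₀⟨η(RΩ̂), Ω⟩ = ½ c₀ tr(Ω̂ᵀRΩ̂) ≤ ½ c₀ tr(Ω̂ᵀΩ̂) = c₀‖Ω‖²`, where the inequality holds column by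
column since `⟨v, Rv⟩ ≤ ‖v‖²` for orthogonal `R` (expand `‖v - Rv‖² ≥ 0`).
-/

theorem HasDerivAt.linearMap_comp {E F : Type*} [NormedAddCommGroup E] [NormedSpace ℝ E]
    [FiniteDimensional ℝ E] [NormedAddCommGroup F] [NormedSpace ℝ F] (L : E →ₗ[ℝ] F)
    {f : ℝ → E} {f' : E} {t : ℝ} (hf : HasDerivAt f f' t) :
    HasDerivAt (fun s => L (f s)) (L f') t :=
  (LinearMap.toContinuousLinearMap L).hasFDerivAt.comp_hasDerivAt t hf

theorem dotProduct_mulVec_le_dotProduct_self {n : Type*} [Fintype n] [DecidableEq n]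
    {Q : Matrix n n ℝ} (hQ : Qᵀ * Q = 1) (v : n → ℝ) : v ⬝ᵥ (Q *ᵥ v) ≤ v ⬝ᵥ v := by
  have hiso : (Q *ᵥ v) ⬝ᵥ (Q *ᵥ v) = v ⬝ᵥ v := by
    rw [dotProduct_mulVec, ← mulVec_transpose, mulVec_mulVec, hQ, one_mulVec]
  have hnonneg : 0 ≤ (v - Q *ᵥ v) ⬝ᵥ (v - Q *ᵥ v) :=
    Finset.sum_nonneg fun i _ => mul_self_nonneg _
  rw [sub_dotProduct, dotProduct_sub, dotProduct_sub, hiso, dotProduct_comm (Q *ᵥ v) v] at hnonneg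
  linarith

theorem trace_transpose_mul_mul_le {n : Type*} [Fintype n] [DecidableEq n] {Q : Matrix n n ℝ}
    (hQ : Qᵀ * Q = 1) (M : Matrix n n ℝ) : (Mᵀ * Q * M).trace ≤ (Mᵀ * M).trace := by
  refine Finset.sum_le_sum fun j _ => ?_
  rw [diag_apply, diag_apply, Matrix.mul_assoc, mul_apply', mul_apply']
  exact dotProduct_mulVec_le_dotProduct_self hQ (Mᵀ j)

def etaVecLinearMap : Matrix (Fin 3) (Fin 3) ℝ →ₗ[ℝ] V3 where
  toFun := etaVec
  map_add' A B := by ext i; fin_cases i <;> simp [etaVec, vee] <;> ring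
  map_smul' c A := by ext i; fin_cases i <;> simp [etaVec, vee] <;> ring

theorem psi_eq_half_three_sub_trace (A : Matrix (Fin 3) (Fin 3) ℝ) :
    Psi A = 1 / 2 * (3 - A.trace) := by
  simp [Psi, trace_sub]

section Derivatives

variable {f : ℝ → Matrix (Fin 3) (Fin 3) ℝ} {f' : Matrix (Fin 3) (Fin 3) ℝ} {t : ℝ}

theorem HasDerivAt.etaVec (hf : HasDerivAt f f' t) :
    HasDerivAt (fun s => etaVec (f s)) (etaVec f') t :=
  hf.linearMap_comp etaVecLinearMap

theorem HasDerivAt.psi (hf : HasDerivAt f f' t) :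
    HasDerivAt (fun s => Psi (f s)) (-(1 / 2) * f'.trace) t := by
  have h := ((hf.linearMap_comp (traceLinearMap (Fin 3) ℝ ℝ)).const_sub 3).const_mul (1 / 2 : ℝ)
  simp only [traceLinearMap_apply, ← psi_eq_half_three_sub_trace] at h
  exact h.congr_deriv (by ring)

end Derivatives

theorem hat_transpose (x : V3) : (hat x)ᵀ = -hat x := by
  ext i j; fin_cases i <;> fin_cases j <;> simp [hat]

theorem trace_hat_transpose_mul (x : V3) : ((hat x)ᵀ * hat x).trace = 2 * ‖x‖ ^ 2 := by
  simp [hat, trace, Fin.sum_univ_three, mul_apply, EuclideanSpace.norm_sq_eq]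
  ring

theorem inner_etaVec_eq_neg_half_trace_mul_hat (A : Matrix (Fin 3) (Fin 3) ℝ) (x : V3) :
    ⟪etaVec A, x⟫ = -(1 / 2) * (A * hat x).trace := by
  simp [etaVec, vee, hat, trace, Fin.sum_univ_three, mul_apply, PiLp.inner_apply]
  ring

theorem inner_etaVec_mul_hat_le {Q : Matrix (Fin 3) (Fin 3) ℝ} (hQ : Qᵀ * Q = 1) (x : V3) :
    ⟪etaVec (Q * hat x), x⟫ ≤ ‖x‖ ^ 2 :=
  calc ⟪etaVec (Q * hat x), x⟫ = 1 / 2 * ((hat x)ᵀ * Q * hat x).trace := by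
        rw [inner_etaVec_eq_neg_half_trace_mul_hat, Matrix.mul_assoc (hat x)ᵀ,
          trace_mul_comm (hat x)ᵀ, hat_transpose, Matrix.mul_neg, trace_neg]
        ring
    _ ≤ 1 / 2 * ((hat x)ᵀ * hat x).trace := by
        gcongr; exact trace_transpose_mul_mul_le hQ _
    _ = ‖x‖ ^ 2 := by rw [trace_hat_transpose_mul]; ring

theorem attitude_lyapunov_deriv_general (k₁ k₂ c₀ : ℝ) (hc₀ : 0 < c₀)
    (R : ℝ → Matrix (Fin 3) (Fin 3) ℝ) (Ω : ℝ → V3)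
    (hSO : ∀ t ≥ (0:ℝ), SO3 (R t))
    (hR : ∀ t ≥ (0:ℝ), HasDerivAt R (R t * hat (Ω t)) t)
    (hΩ : ∀ t ≥ (0:ℝ), HasDerivAt Ω (-(k₂ • etaVec (R t)) - k₁ • Ω t) t) :
    ∀ t ≥ (0:ℝ),
      DifferentiableAt ℝ
        (fun s => (1/2) * ‖Ω s‖ ^ 2 + c₀ * ⟪etaVec (R s), Ω s⟫ +
          (k₂ + c₀ * k₁) * Psi (R s)) t ∧
      deriv (fun s => (1/2) * ‖Ω s‖ ^ 2 + c₀ * ⟪etaVec (R s), Ω s⟫ +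
          (k₂ + c₀ * k₁) * Psi (R s)) t ≤
        -(k₁ - c₀) * ‖Ω t‖ ^ 2 - c₀ * k₂ * ‖etaVec (R t)‖ ^ 2 := by
  intro t ht
  have hΨ := (hR t ht).psi
  rw [← inner_etaVec_eq_neg_half_trace_mul_hat] at hΨ
  have hV := (((hΩ t ht).norm_sq.const_mul (1 / 2)).fun_add
    (((hR t ht).etaVec.inner ℝ (hΩ t ht)).const_mul c₀)).fun_add (hΨ.const_mul (k₂ + c₀ * k₁))
  refine ⟨hV.differentiableAt, hV.deriv.trans_le ?_⟩
  have hdiss := mul_le_mul_of_nonneg_left (inner_etaVec_mul_hat_le (hSO t ht).1 (Ω t)) hc₀.le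
  simp only [inner_sub_right, inner_neg_right, real_inner_smul_right,
    real_inner_self_eq_norm_sq, real_inner_comm (etaVec (R t)) (Ω t)]
  linarith

/-- along the closed-loop attitude dynamics `Ṙ = RΩ̂`,
`Ω̇ = −k₂η(R) − k₁Ω`, the Lyapunov function
`V₂ = ½‖Ω‖² + c₀⟨η(R),Ω⟩ + (k₂+c₀k₁)Ψ(R)` is differentiable with
`V̇₂ ≤ −(k₁−c₀)‖Ω‖² − c₀k₂‖η(R)‖²` for `0 < c₀ < k₁`. -/
theorem attitude_lyapunov_deriv (k₁ k₂ c₀ : ℝ) (hk₁ : 0 < k₁) (hk₂ : 0 < k₂)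
    (hc₀ : 0 < c₀) (hc₀k₁ : c₀ < k₁)
    (R : ℝ → Matrix (Fin 3) (Fin 3) ℝ) (Ω : ℝ → V3)
    (hSO : ∀ t ≥ (0:ℝ), SO3 (R t))
    (hR : ∀ t ≥ (0:ℝ), HasDerivAt R (R t * hat (Ω t)) t)
    (hΩ : ∀ t ≥ (0:ℝ), HasDerivAt Ω (-(k₂ • etaVec (R t)) - k₁ • Ω t) t) :
    ∀ t ≥ (0:ℝ),
      DifferentiableAt ℝ
        (fun s => (1/2) * ‖Ω s‖ ^ 2 + c₀ * ⟪etaVec (R s), Ω s⟫ +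
          (k₂ + c₀ * k₁) * Psi (R s)) t ∧
      deriv (fun s => (1/2) * ‖Ω s‖ ^ 2 + c₀ * ⟪etaVec (R s), Ω s⟫ +
          (k₂ + c₀ * k₁) * Psi (R s)) t ≤
        -(k₁ - c₀) * ‖Ω t‖ ^ 2 - c₀ * k₂ * ‖etaVec (R t)‖ ^ 2 :=
  attitude_lyapunov_deriv_general k₁ k₂ c₀ hc₀ R Ω hSO hR hΩ
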